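/- Let H be a separable Hilbert space with orthonormal basis {e_α}, and let σ : 𝕋ⁿ × ℤⁿ → L(H) be a symbol such that Σ_{ξ∈ℤⁿ} Σ_α ‖σ(·,ξ)e_α‖_{L^{p₂}(𝕋ⁿ,H)}^s < ∞ for some 0 < s ≤ 1 and 1 ≤ p₁, p₂ < ∞. Then the pseudo-differential operator Af(x) = Σ_ξ e^{2πi x·ξ} σ(x,ξ) f̂(ξ) extends to an s-nuclear operator from L^{p₁}(𝕋ⁿ,H) to L^{p₂}(𝕋ⁿ,H). -/

import Mathlib

/-!
The functionals `g_{ξ,α} f = ⟪e_α, f̂(ξ)⟫` have norm at most `1` on `L^{p₁}`, because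
`‖f̂(ξ)‖ ≤ ‖f‖₁ ≤ ‖f‖_{p₁}` on the probability space `𝕋ⁿ`, and `h_{ξ,α} = e_ξ σ(·,ξ) e_α` has
`L^{p₂}`-norm `‖σ(·,ξ) e_α‖_{p₂}`. So `Σ ‖g‖ˢ ‖h‖ˢ < ∞`, and since `s ≤ 1` also `Σ ‖g‖ ‖h‖ < ∞`:
the series `A = Σ g_{ξ,α} ⊗ h_{ξ,α}` converges in operator norm and is `s`-nuclear.
On `f = e_{ξ₀} v` only the terms with `ξ = ξ₀` survive, with coefficients `⟪e_α, v⟫`, and expanding `v` in the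
basis `e_α` gives `A f = e_{ξ₀} σ(·,ξ₀) v` almost everywhere, since an absolutely convergent
series in `Lᵖ` converges pointwise almost everywhere.
-/

open MeasureTheory
open scoped ENNReal

noncomputable section

instance : Fact ((0:ℝ) < 1) := ⟨zero_lt_one⟩

/-- The `n`-torus `𝕋ⁿ = ℝⁿ/ℤⁿ`. -/
abbrev Torus (n : ℕ) := Fin n → AddCircle (1 : ℝ)

/-- The character `e_ξ(x) = e^{2πi x·ξ}` on the torus. -/
def tChar {n : ℕ} (ξ : Fin n → ℤ) (x : Torus n) : ℂ := ∏ i, fourier (ξ i) (x i)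

/-- The vector-valued Fourier coefficient `f̂(ξ) = ∫_{𝕋ⁿ} e^{-2πi x·ξ} f(x) dx`. -/
def vFourierCoeff {n : ℕ} {H : Type*} [NormedAddCommGroup H] [NormedSpace ℂ H]
    (f : Torus n → H) (ξ : Fin n → ℤ) : H :=
  ∫ x : Torus n, tChar (-ξ) x • f x

/-- `A` is the Fourier multiplier with operator-valued symbol `σ`:
`(Af)^(ξ) = σ(ξ) f̂(ξ)` for all `ξ ∈ ℤⁿ`. -/
def IsFourierMultiplier {n : ℕ} {H : Type*} [NormedAddCommGroup H] [NormedSpace ℂ H]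
    (A : Lp H 2 (volume : Measure (Torus n)) →L[ℂ] Lp H 2 (volume : Measure (Torus n)))
    (σ : (Fin n → ℤ) → H →L[ℂ] H) : Prop :=
  ∀ (f : Lp H 2 (volume : Measure (Torus n))) (ξ : Fin n → ℤ),
    vFourierCoeff (A f) ξ = σ ξ (vFourierCoeff (f : Torus n → H) ξ)

/-- An operator `T : E → F` between Banach spaces is `s`-nuclear, `0 < s ≤ 1`, if
`T = Σ_k ⟨g_k, ·⟩ h_k` with `g_k ∈ E'`, `h_k ∈ F` and `Σ_k ‖g_k‖^s ‖h_k‖^s < ∞`. -/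
def IsSNuclear {E F : Type*} [NormedAddCommGroup E] [NormedSpace ℂ E]
    [NormedAddCommGroup F] [NormedSpace ℂ F] (s : ℝ) (T : E →L[ℂ] F) : Prop :=
  ∃ (ι : Type) (_ : Countable ι) (g : ι → (E →L[ℂ] ℂ)) (h : ι → F),
    Summable (fun k => ‖g k‖ ^ s * ‖h k‖ ^ s) ∧
    ∀ x : E, HasSum (fun k => g k x • h k) (T x)

lemma summable_of_summable_rpow {ι : Type*} {a : ι → ℝ} {s : ℝ} (ha : ∀ i, 0 ≤ a i)
    (hs0 : 0 < s) (hs1 : s ≤ 1) (h : Summable fun i => a i ^ s) : Summable a := by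
  have hs : (ENNReal.ofReal s).toReal = s := ENNReal.toReal_ofReal hs0.le
  have hℓs : Memℓp a (ENNReal.ofReal s) := by
    rw [memℓp_gen_iff (by rwa [hs])]
    simpa only [hs, Real.norm_eq_abs, abs_of_nonneg (ha _)] using h
  have hℓ1 := (memℓp_gen_iff (by simp)).mp (hℓs.of_exponent_ge (ENNReal.ofReal_le_one.mpr hs1))
  simpa only [ENNReal.toReal_one, Real.rpow_one, Real.norm_eq_abs, abs_of_nonneg (ha _)] using hℓ1

lemma hasSum_prod_ite_fst {β γ M : Type*} [AddCommMonoid M] [TopologicalSpace M]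
    [DecidableEq β] (b₀ : β) {f : β → γ → M} {a : M} (hf : HasSum (f b₀) a) :
    HasSum (fun q : β × γ => if q.1 = b₀ then f q.1 q.2 else 0) a := by
  have hinj : Function.Injective fun c : γ => (b₀, c) := fun c c' hc => congrArg Prod.snd hc
  refine (hinj.hasSum_iff fun q hq => if_neg fun h => hq ⟨q.2, ?_⟩).mp
    (by simpa [Function.comp_def] using hf)
  rw [← h]

lemma HilbertBasis.hasSum_ite_inner_smul_apply {I H E β : Type*} [NormedAddCommGroup H]
    [InnerProductSpace ℂ H] [NormedAddCommGroup E] [NormedSpace ℂ E] [DecidableEq β]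
    (b : HilbertBasis I ℂ H) (L : β → H →L[ℂ] E) (β₀ : β) (v : H) :
    HasSum (fun q : β × I => (if q.1 = β₀ then inner ℂ (b q.2) v else 0) • L q.1 (b q.2))
      (L β₀ v) := by
  have hexp : HasSum (fun α => inner ℂ (b α) v • L β₀ (b α)) (L β₀ v) := by
    simpa only [b.repr_apply_apply, map_smul] using (b.hasSum_repr v).mapL (L β₀)
  simpa only [ite_smul, zero_smul] using
    hasSum_prod_ite_fst β₀ (f := fun β α => inner ℂ (b α) v • L β (b α)) hexp

lemma MeasureTheory.Lp.ae_hasSum_coeFn {α E : Type*} [MeasurableSpace α] {μ : Measure α}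
    [NormedAddCommGroup E] [CompleteSpace E] {p : ℝ≥0∞} [Fact (1 ≤ p)] {ι : Type*} [Countable ι]
    {u : ι → Lp E p μ} {S : Lp E p μ} (hS : HasSum u S) (hu : Summable fun i => ‖u i‖) :
    ∀ᵐ x ∂μ, HasSum (fun i => u i x) (S x) := by
  simpa only [hS.tsum_eq] using Lp.hasSum_coeFn_tsum (tsum_enorm_ne_top_iff_summable_norm.mpr hu)

section Nuclear

variable {E F : Type*} [NormedAddCommGroup E] [NormedSpace ℂ E]
  [NormedAddCommGroup F] [NormedSpace ℂ F] {ι : Type*}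

lemma exists_hasSum_smul_of_summable [CompleteSpace F] (g : ι → E →L[ℂ] ℂ) (h : ι → F)
    (hgh : Summable fun k => ‖g k‖ * ‖h k‖) :
    ∃ T : E →L[ℂ] F, ∀ x, HasSum (fun k => g k x • h k) (T x) := by
  have hT : Summable fun k => (g k).smulRight (h k) :=
    .of_norm <| hgh.congr fun k => (ContinuousLinearMap.norm_smulRight_apply _ _).symm
  exact ⟨∑' k, (g k).smulRight (h k), fun x => hT.hasSum.mapL (.apply ℂ F x)⟩

lemma IsSNuclear.of_hasSum [Countable ι] {s : ℝ} (g : ι → E →L[ℂ] ℂ) (h : ι → F)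
    (hgh : Summable fun k => ‖g k‖ ^ s * ‖h k‖ ^ s) {T : E →L[ℂ] F}
    (hT : ∀ x, HasSum (fun k => g k x • h k) (T x)) : IsSNuclear s T := by
  obtain ⟨e, he⟩ := Countable.exists_injective_nat ι
  let r := Equiv.ofInjective e he
  refine ⟨Set.range e, inferInstance, g ∘ r.symm, h ∘ r.symm, ?_, fun x => ?_⟩
  · exact (r.symm.summable_iff (f := fun k => ‖g k‖ ^ s * ‖h k‖ ^ s)).mpr hgh
  · exact (r.symm.hasSum_iff (f := fun k => g k x • h k)).mpr (hT x)

lemma MeasureTheory.Lp.ae_hasSum_apply_of_hasSum_smul {α : Type*} [MeasurableSpace α]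
    {μ : Measure α} [CompleteSpace F] {p : ℝ≥0∞} [Fact (1 ≤ p)] [Countable ι]
    {g : ι → E →L[ℂ] ℂ} {h : ι → Lp F p μ} {T : E →L[ℂ] Lp F p μ}
    (hT : ∀ x, HasSum (fun k => g k x • h k) (T x)) (hgh : Summable fun k => ‖g k‖ * ‖h k‖)
    {φ : ι → α → F} (hφ : ∀ k, h k =ᵐ[μ] φ k) (x : E) :
    ∀ᵐ y ∂μ, HasSum (fun k => g k x • φ k y) (T x y) := by
  have hnorm : Summable fun k => ‖g k x • h k‖ :=
    (hgh.mul_left ‖x‖).of_nonneg_of_le (fun k => norm_nonneg _) fun k => by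
      rw [norm_smul, mul_left_comm, ← mul_assoc]
      exact mul_le_mul_of_nonneg_right ((g k).le_opNorm x) (norm_nonneg _)
  have hterms : ∀ᵐ y ∂μ, ∀ k, (g k x • h k : Lp F p μ) y = g k x • φ k y :=
    ae_all_iff.mpr fun k => (Lp.coeFn_smul _ _).trans <|
      (hφ k).mono fun y hy => congrArg (g k x • ·) hy
  filter_upwards [Lp.ae_hasSum_coeFn (hT x) hnorm, hterms] with y hy hyk
  simpa only [hyk] using hy

end Nuclear

instance : IsProbabilityMeasure (volume : Measure (AddCircle (1 : ℝ))) := by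
  rw [AddCircle.volume_eq_smul_haarAddCircle, ENNReal.ofReal_one, one_smul]
  infer_instance

section Characters

variable {n : ℕ}

lemma norm_tChar (ξ : Fin n → ℤ) (x : Torus n) : ‖tChar ξ x‖ = 1 := by
  rw [tChar, norm_prod]
  exact Finset.prod_eq_one fun i _ => by rw [fourier_apply, Circle.norm_coe]

lemma continuous_tChar (ξ : Fin n → ℤ) : Continuous (tChar ξ) :=
  (UnitAddTorus.mFourier ξ).continuous

lemma tChar_add (ξ η : Fin n → ℤ) (x : Torus n) : tChar (ξ + η) x = tChar ξ x * tChar η x := by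
  simp only [tChar, Pi.add_apply, fourier_add, Finset.prod_mul_distrib]

lemma integral_fourier_unitAddCircle (k : ℤ) :
    ∫ x : AddCircle (1 : ℝ), fourier k x = if k = 0 then 1 else 0 := by
  split_ifs with hk
  · simp [hk]
  · rw [AddCircle.volume_eq_smul_haarAddCircle, ENNReal.ofReal_one, one_smul]
    exact integral_eq_zero_of_add_right_eq_neg (fourier_add_half_inv_index hk one_pos)

lemma integral_tChar (ξ : Fin n → ℤ) : ∫ x : Torus n, tChar ξ x = if ξ = 0 then 1 else 0 := by
  simp only [tChar]
  rw [integral_fintype_prod_volume_eq_prod]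
  simp_rw [integral_fourier_unitAddCircle]
  split_ifs with hξ
  · simp [hξ]
  · obtain ⟨i, hi⟩ := Function.ne_iff.mp hξ
    exact Finset.prod_eq_zero (Finset.mem_univ i) (if_neg hi)

end Characters

section FourierCoeff

variable {n : ℕ} {H : Type*} [NormedAddCommGroup H] [NormedSpace ℂ H]

lemma vFourierCoeff_congr_ae {f g : Torus n → H} (h : f =ᵐ[volume] g) (ξ : Fin n → ℤ) :
    vFourierCoeff f ξ = vFourierCoeff g ξ :=
  integral_congr_ae (h.mono fun x hx => by simp only [hx])

lemma vFourierCoeff_tChar_smul [CompleteSpace H] (ξ₀ ξ : Fin n → ℤ) (v : H) :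
    vFourierCoeff (fun x => tChar ξ₀ x • v) ξ = if ξ = ξ₀ then v else 0 := by
  simp_rw [vFourierCoeff, smul_smul, ← tChar_add]
  rw [integral_smul_const, integral_tChar]
  simp only [neg_add_eq_zero, ite_smul, one_smul, zero_smul]

lemma eLpNorm_tChar_smul (ξ : Fin n → ℤ) (f : Torus n → H) (p : ℝ≥0∞) :
    eLpNorm (fun x => tChar ξ x • f x) p volume = eLpNorm f p volume :=
  eLpNorm_congr_norm_ae <| .of_forall fun x => by rw [norm_smul, norm_tChar, one_mul]

lemma MeasureTheory.MemLp.tChar_smul {f : Torus n → H} {p : ℝ≥0∞} (hf : MemLp f p volume)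
    (ξ : Fin n → ℤ) :
    MemLp (fun x => tChar ξ x • f x) p volume :=
  ⟨(continuous_tChar ξ).aestronglyMeasurable.smul hf.1,
    (eLpNorm_tChar_smul ξ f p).symm ▸ hf.2⟩

lemma enorm_vFourierCoeff_le_eLpNorm {p : ℝ≥0∞} (hp : 1 ≤ p) {f : Torus n → H}
    (hf : AEStronglyMeasurable f volume) (ξ : Fin n → ℤ) :
    ‖vFourierCoeff f ξ‖ₑ ≤ eLpNorm f p volume :=
  calc ‖vFourierCoeff f ξ‖ₑ ≤ eLpNorm (fun x => tChar (-ξ) x • f x) 1 volume := by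
        rw [eLpNorm_one_eq_lintegral_enorm]; exact enorm_integral_le_lintegral_enorm _
    _ = eLpNorm f 1 volume := eLpNorm_tChar_smul _ _ _
    _ ≤ eLpNorm f p volume := eLpNorm_le_eLpNorm_of_exponent_le hp hf

variable (p : ℝ≥0∞) [Fact (1 ≤ p)]

def vFourierCoeffCLM (ξ : Fin n → ℤ) : Lp H p (volume : Measure (Torus n)) →L[ℂ] H :=
  LinearMap.mkContinuous
    { toFun := fun f => vFourierCoeff f ξ
      map_add' := fun f g => by
        have hint (u : Lp H p (volume : Measure (Torus n))) :=
          (((Lp.memLp u).tChar_smul (-ξ)).integrable Fact.out)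
        rw [vFourierCoeff_congr_ae (Lp.coeFn_add f g), vFourierCoeff, vFourierCoeff,
          vFourierCoeff, ← integral_add (hint f) (hint g)]
        simp_rw [Pi.add_apply, smul_add]
      map_smul' := fun c f => by
        rw [vFourierCoeff_congr_ae (Lp.coeFn_smul c f), vFourierCoeff, vFourierCoeff,
          RingHom.id_apply, ← integral_smul]
        simp_rw [Pi.smul_apply, smul_comm c] }
    1 fun f => by
      rw [one_mul, Lp.norm_def, ← toReal_enorm]
      exact ENNReal.toReal_mono (Lp.eLpNorm_ne_top f)
        (enorm_vFourierCoeff_le_eLpNorm Fact.out (Lp.aestronglyMeasurable f) ξ)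

lemma vFourierCoeffCLM_apply (ξ : Fin n → ℤ) (f : Lp H p (volume : Measure (Torus n))) :
    vFourierCoeffCLM p ξ f = vFourierCoeff f ξ :=
  rfl

lemma norm_vFourierCoeffCLM_le (ξ : Fin n → ℤ) :
    ‖(vFourierCoeffCLM p ξ : Lp H p (volume : Measure (Torus n)) →L[ℂ] H)‖ ≤ 1 :=
  LinearMap.mkContinuous_norm_le _ zero_le_one _

end FourierCoeff

section FourierCoeffInner

variable {n : ℕ} {H I : Type*} [NormedAddCommGroup H] [InnerProductSpace ℂ H]
  (p : ℝ≥0∞) [Fact (1 ≤ p)] (b : HilbertBasis I ℂ H)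

def fourierCoeffInnerCLM (ξ : Fin n → ℤ) (α : I) :
    Lp H p (volume : Measure (Torus n)) →L[ℂ] ℂ :=
  (innerSL ℂ (b α)).comp (vFourierCoeffCLM p ξ)

lemma norm_fourierCoeffInnerCLM_le (ξ : Fin n → ℤ) (α : I) :
    ‖fourierCoeffInnerCLM p b ξ α‖ ≤ 1 := by
  refine (ContinuousLinearMap.opNorm_comp_le _ _).trans ?_
  simpa [b.orthonormal.1 α] using norm_vFourierCoeffCLM_le (H := H) (n := n) p ξ

lemma fourierCoeffInnerCLM_apply_of_ae_eq [CompleteSpace H]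
    {f : Lp H p (volume : Measure (Torus n))} {ξ₀ : Fin n → ℤ} {v : H}
    (hf : f =ᵐ[volume] fun x => tChar ξ₀ x • v) (ξ : Fin n → ℤ) (α : I) :
    fourierCoeffInnerCLM p b ξ α f = if ξ = ξ₀ then inner ℂ (b α) v else 0 := by
  rw [fourierCoeffInnerCLM, ContinuousLinearMap.comp_apply, vFourierCoeffCLM_apply,
    vFourierCoeff_congr_ae hf, vFourierCoeff_tChar_smul]
  split_ifs <;> simp

end FourierCoeffInner

theorem pseudodiff_extends_sNuclear_general {n : ℕ} {H : Type*} [NormedAddCommGroup H]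
    [InnerProductSpace ℂ H] [CompleteSpace H]
    {I : Type*} [Countable I] (b : HilbertBasis I ℂ H)
    (s : ℝ) (hs0 : 0 < s) (hs1 : s ≤ 1)
    (p₁ p₂ : ℝ≥0∞) [Fact (1 ≤ p₁)] [Fact (1 ≤ p₂)]
    (σ : Torus n → (Fin n → ℤ) → H →L[ℂ] H)
    (hmeas : ∀ (ξ : Fin n → ℤ) (v : H),
      AEStronglyMeasurable (fun x : Torus n => σ x ξ v) volume)
    (hfin : ∀ (ξ : Fin n → ℤ) (α : I),
      eLpNorm (fun x : Torus n => σ x ξ (b α)) p₂ volume < ⊤)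
    (hσ : Summable fun q : (Fin n → ℤ) × I =>
      ((eLpNorm (fun x : Torus n => σ x q.1 (b q.2)) p₂ volume).toReal) ^ s) :
    ∃ A : Lp H p₁ (volume : Measure (Torus n)) →L[ℂ] Lp H p₂ (volume : Measure (Torus n)),
      IsSNuclear s A ∧
      ∀ (f : Lp H p₁ (volume : Measure (Torus n))) (ξ₀ : Fin n → ℤ) (v : H),
        (f : Torus n → H) =ᵐ[volume] (fun x => tChar ξ₀ x • v) →
        (A f : Torus n → H) =ᵐ[volume] (fun x => tChar ξ₀ x • σ x ξ₀ v) := by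
  let g (q : (Fin n → ℤ) × I) := fourierCoeffInnerCLM p₁ b q.1 q.2
  have hmem (q : (Fin n → ℤ) × I) : MemLp (fun x => tChar q.1 x • σ x q.1 (b q.2)) p₂ volume :=
    MemLp.tChar_smul ⟨hmeas q.1 (b q.2), hfin q.1 q.2⟩ q.1
  let h (q : (Fin n → ℤ) × I) : Lp H p₂ (volume : Measure (Torus n)) := (hmem q).toLp
  have hgh_s : Summable fun q => ‖g q‖ ^ s * ‖h q‖ ^ s := by
    refine hσ.of_nonneg_of_le (fun q => by positivity) fun q => ?_
    rw [Lp.norm_toLp, eLpNorm_tChar_smul]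
    exact mul_le_of_le_one_left (by positivity)
      (Real.rpow_le_one (norm_nonneg (g q)) (norm_fourierCoeffInnerCLM_le _ _ _ _) hs0.le)
  have hgh : Summable fun q => ‖g q‖ * ‖h q‖ :=
    summable_of_summable_rpow (fun q => by positivity) hs0 hs1
      (hgh_s.congr fun q => (Real.mul_rpow (norm_nonneg (g q)) (norm_nonneg _)).symm)
  obtain ⟨A, hA⟩ := exists_hasSum_smul_of_summable g h hgh
  refine ⟨A, .of_hasSum g h hgh_s hA, fun f ξ₀ v hf => ?_⟩
  filter_upwards [Lp.ae_hasSum_apply_of_hasSum_smul hA hgh (fun q => (hmem q).coeFn_toLp) f]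
    with x hx
  refine hx.unique ((b.hasSum_ite_inner_smul_apply (fun ξ => tChar ξ x • σ x ξ) ξ₀ v).congr_fun
    fun q => ?_)
  rw [fourierCoeffInnerCLM_apply_of_ae_eq p₁ b hf]
  rfl

/-- if `σ : 𝕋ⁿ × ℤⁿ → L(H)` satisfies
`Σ_ξ Σ_α ‖σ(·,ξ)e_α‖_{L^{p₂}(𝕋ⁿ,H)}^s < ∞` for an orthonormal basis `{e_α}` of `H`,
then the periodic pseudo-differential operator `Af(x) = Σ_ξ e^{2πi x·ξ} σ(x,ξ) f̂(ξ)`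
extends to an `s`-nuclear operator from `L^{p₁}(𝕋ⁿ,H)` to `L^{p₂}(𝕋ⁿ,H)`. -/
theorem pseudodiff_extends_sNuclear {n : ℕ} {H : Type*} [NormedAddCommGroup H]
    [InnerProductSpace ℂ H] [CompleteSpace H]
    {I : Type*} [Countable I] (b : HilbertBasis I ℂ H)
    (s : ℝ) (hs0 : 0 < s) (hs1 : s ≤ 1)
    (p₁ p₂ : ℝ≥0∞) [Fact (1 ≤ p₁)] (hp₁' : p₁ ≠ ⊤) [Fact (1 ≤ p₂)] (hp₂' : p₂ ≠ ⊤)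
    (σ : Torus n → (Fin n → ℤ) → H →L[ℂ] H)
    (hmeas : ∀ (ξ : Fin n → ℤ) (v : H),
      AEStronglyMeasurable (fun x : Torus n => σ x ξ v) volume)
    (hfin : ∀ (ξ : Fin n → ℤ) (α : I),
      eLpNorm (fun x : Torus n => σ x ξ (b α)) p₂ volume < ⊤)
    (hσ : Summable fun q : (Fin n → ℤ) × I =>
      ((eLpNorm (fun x : Torus n => σ x q.1 (b q.2)) p₂ volume).toReal) ^ s) :
    ∃ A : Lp H p₁ (volume : Measure (Torus n)) →L[ℂ] Lp H p₂ (volume : Measure (Torus n)),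
      IsSNuclear s A ∧
      ∀ (f : Lp H p₁ (volume : Measure (Torus n))) (ξ₀ : Fin n → ℤ) (v : H),
        (f : Torus n → H) =ᵐ[volume] (fun x => tChar ξ₀ x • v) →
        (A f : Torus n → H) =ᵐ[volume] (fun x => tChar ξ₀ x • σ x ξ₀ v) :=
  pseudodiff_extends_sNuclear_general b s hs0 hs1 p₁ p₂ σ hmeas hfin hσ
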